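/- arXiv:2509.23496 — 2 statements merged into one kernel-verified Lean document; each statement's English description precedes it below -/
import Mathlib

section
/- Let d ≥ 1 be an integer, let γ > 0 and let δ satisfy 2 < δ < 1/(2γ). Then there exist R₀ ≥ 4 and constants 0 < c' ≤ C' < ∞ (depending only on d, γ and δ) such that for all r ≥ 2 and all R ≥ max(8r, R₀) one has c'·r^{d(2−δ)}·R^{d(1−δ)} ≤ ∫_{{x ∈ ℝ^d : 2r ≤ |x| ≤ R/2}} ∫_0^1 min(v^{−γδ} r^d |x|^{−dδ}, 1) · min(v^{−γδ} R^{d(1−δ)}, 1) dv dx ≤ C'·r^{d(2−δ)}·R^{d(1−δ)}. -/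
open MeasureTheory Real Set

lemma radial_eq (d : ℕ) (hd : 1 ≤ d) (q : ℝ) (a b : ℝ) (ha : 0 < a) :
    ∫ x in {x : EuclideanSpace ℝ (Fin d) | a ≤ ‖x‖ ∧ ‖x‖ ≤ b}, ‖x‖ ^ q =
      ((d : ℝ) * (volume (Metric.ball (0 : EuclideanSpace ℝ (Fin d)) 1)).toReal) *
        ∫ y in Icc a b, y ^ ((d : ℝ) - 1 + q) := by
  haveI : Nonempty (Fin d) := Fin.pos_iff_nonempty.mp hd
  haveI : Nontrivial (EuclideanSpace ℝ (Fin d)) := by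
    apply Module.nontrivial_of_finrank_pos (R := ℝ)
    rw [finrank_euclideanSpace_fin]
    omega
  have hA : MeasurableSet {x : EuclideanSpace ℝ (Fin d) | a ≤ ‖x‖ ∧ ‖x‖ ≤ b} := by
    have : {x : EuclideanSpace ℝ (Fin d) | a ≤ ‖x‖ ∧ ‖x‖ ≤ b} = (‖·‖) ⁻¹' (Icc a b) := by
      ext x; simp [mem_Icc]
    rw [this]
    exact measurable_norm measurableSet_Icc
  rw [← integral_indicator hA]
  have key : ∀ x : EuclideanSpace ℝ (Fin d),
      ({x : EuclideanSpace ℝ (Fin d) | a ≤ ‖x‖ ∧ ‖x‖ ≤ b}).indicator (fun x => ‖x‖ ^ q) x =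
        (Icc a b).indicator (fun y => y ^ q) ‖x‖ := by
    intro x
    simp only [Set.indicator_apply, Set.mem_setOf_eq, Set.mem_Icc]
  simp only [key]
  rw [integral_fun_norm_addHaar volume (fun y => (Icc a b).indicator (fun y => y ^ q) y)]
  rw [finrank_euclideanSpace_fin]
  rw [nsmul_eq_mul, smul_eq_mul]
  have : ∀ y : ℝ, y ^ (d - 1) • (Icc a b).indicator (fun y => y ^ q) y =
      (Icc a b).indicator (fun y => y ^ (d - 1) * y ^ q) y := by
    intro y
    simp only [Set.indicator_apply, smul_eq_mul, mul_ite, mul_zero]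
  simp only [this]
  rw [setIntegral_indicator measurableSet_Icc]
  have hIcc : Icc a b ∩ Ioi (0:ℝ) = Icc a b := by
    apply Set.inter_eq_left.mpr
    intro y hy
    exact lt_of_lt_of_le ha hy.1
  rw [Set.inter_comm, hIcc]
  have : ∫ y in Icc a b, y ^ (d - 1) * y ^ q = ∫ y in Icc a b, y ^ ((d : ℝ) - 1 + q) := by
    apply setIntegral_congr_fun measurableSet_Icc
    intro y hy
    have hy0 : 0 < y := lt_of_lt_of_le ha hy.1
    show y ^ (d - 1) * y ^ q = y ^ ((d : ℝ) - 1 + q)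
    rw [← Real.rpow_natCast y (d - 1), ← Real.rpow_add hy0]
    congr 1
    push_cast [Nat.cast_sub hd]
    ring
  rw [this]
  rw [measureReal_def]
  ring

set_option maxHeartbeats 2000000 in
/-- Two-edge annulus crossing integral in the regime `2 < δ < 1/(2γ)`: for `2 ≤ r` and
`R ≥ max(8r, R₀)`,
`∫_{2r ≤ |x| ≤ R/2} ∫_0^1 min(v^{-γδ} r^d |x|^{-dδ}, 1) min(v^{-γδ} R^{d(1-δ)}, 1) dv dx
  ≍ r^{d(2-δ)} R^{d(1-δ)}`. -/
theorem stmt_18 (d : ℕ) (hd : 1 ≤ d) (γ δ : ℝ) (hγ0 : 0 < γ)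
    (hδ1 : 2 < δ) (hδ2 : δ < 1 / (2 * γ)) :
    ∃ R₀ : ℝ, 4 ≤ R₀ ∧ ∃ c' C' : ℝ, 0 < c' ∧ c' ≤ C' ∧
      ∀ r R : ℝ, 2 ≤ r → max (8 * r) R₀ ≤ R →
      c' * (r ^ ((d : ℝ) * (2 - δ)) * R ^ ((d : ℝ) * (1 - δ))) ≤
          (∫ x in {x : EuclideanSpace ℝ (Fin d) | 2 * r ≤ ‖x‖ ∧ ‖x‖ ≤ R / 2},
              ∫ v in Ioc (0 : ℝ) 1,
                min (v ^ (-(γ * δ)) * r ^ d * ‖x‖ ^ (-((d : ℝ) * δ))) 1 *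
                  min (v ^ (-(γ * δ)) * R ^ ((d : ℝ) * (1 - δ))) 1) ∧
      (∫ x in {x : EuclideanSpace ℝ (Fin d) | 2 * r ≤ ‖x‖ ∧ ‖x‖ ≤ R / 2},
              ∫ v in Ioc (0 : ℝ) 1,
                min (v ^ (-(γ * δ)) * r ^ d * ‖x‖ ^ (-((d : ℝ) * δ))) 1 *
                  min (v ^ (-(γ * δ)) * R ^ ((d : ℝ) * (1 - δ))) 1) ≤
          C' * (r ^ ((d : ℝ) * (2 - δ)) * R ^ ((d : ℝ) * (1 - δ))) := by
  have hd1 : (1:ℝ) ≤ (d:ℝ) := by exact_mod_cast hd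
  have hδ0 : (0:ℝ) < δ := by linarith
  have hγδ : 2 * (γ * δ) < 1 := by
    have h2γ : (0:ℝ) < 2 * γ := by positivity
    have h := (lt_div_iff₀ h2γ).mp hδ2
    nlinarith
  have hγδ0 : 0 ≤ γ * δ := by positivity
  set q : ℝ := -((d:ℝ) * δ) with hq_def
  set p : ℝ := (d:ℝ) - 1 + q with hp_def
  have hq0 : q ≤ 0 := by rw [hq_def]; nlinarith
  have hp : p < -1 := by rw [hp_def, hq_def]; nlinarith
  have hdq : (d:ℝ) + q ≤ 0 := by rw [hq_def]; nlinarith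
  have hcdpos : (0:ℝ) < (volume (Metric.ball (0 : EuclideanSpace ℝ (Fin d)) 1)).toReal :=
    ENNReal.toReal_pos (Metric.measure_ball_pos volume 0 one_pos).ne' measure_ball_lt_top.ne
  set cd : ℝ := (d : ℝ) * (volume (Metric.ball (0 : EuclideanSpace ℝ (Fin d)) 1)).toReal
    with hcd_def
  have hd0 : (0:ℝ) < (d:ℝ) := by linarith
  have hcd : 0 < cd := mul_pos hd0 hcdpos
  have hp10 : p + 1 < 0 := by linarith
  set c1 : ℝ := cd * (2 * 4 ^ p) with hc1_def
  set C1 : ℝ := cd * ((1 - 2 * (γ * δ))⁻¹ * ((2:ℝ) ^ (p+1) / (-(p+1)))) with hC1_def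
  have hc1 : 0 < c1 := by
    apply mul_pos hcd
    have : (0:ℝ) < (4:ℝ) ^ p := Real.rpow_pos_of_pos (by norm_num) p
    linarith
  have hC1 : 0 < C1 := by
    apply mul_pos hcd
    apply mul_pos (inv_pos.mpr (by linarith))
    exact div_pos (Real.rpow_pos_of_pos two_pos _) (by linarith)
  refine ⟨4, le_refl 4, min c1 C1, max c1 C1, lt_min hc1 hC1, min_le_max, ?_⟩
  intro r R hr hR
  have hr0 : (0:ℝ) < r := by linarith
  have h8r : 8 * r ≤ R := le_trans (le_max_left _ _) hR
  have hR4 : (4:ℝ) ≤ R := le_trans (le_max_right _ _) hR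
  have hR0 : (0:ℝ) < R := by linarith
  have h2r4 : (4:ℝ) ≤ 2 * r := by linarith
  have h2r0 : (0:ℝ) < 2 * r := by linarith
  set A : Set (EuclideanSpace ℝ (Fin d)) := {x | 2 * r ≤ ‖x‖ ∧ ‖x‖ ≤ R / 2} with hA_def
  set Rb : ℝ := R ^ ((d:ℝ) * (1 - δ)) with hRb_def
  have hRb0 : 0 < Rb := Real.rpow_pos_of_pos hR0 _
  have hRb1 : Rb ≤ 1 :=
    Real.rpow_le_one_of_one_le_of_nonpos (by linarith) (by nlinarith)
  set G : EuclideanSpace ℝ (Fin d) → ℝ := fun x =>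
    ∫ v in Ioc (0 : ℝ) 1,
      min (v ^ (-(γ * δ)) * r ^ d * ‖x‖ ^ q) 1 * min (v ^ (-(γ * δ)) * Rb) 1 with hG_def
  have hA_meas : MeasurableSet A := by
    have : A = (‖·‖) ⁻¹' (Icc (2*r) (R/2)) := by
      ext x; simp [hA_def, mem_Icc]
    rw [this]
    exact measurable_norm measurableSet_Icc
  have hA_sub : A ⊆ Metric.closedBall (0 : EuclideanSpace ℝ (Fin d)) (R/2) := by
    intro x hx
    exact mem_closedBall_zero_iff.mpr hx.2
  have hA_fin : volume A < ⊤ := lt_of_le_of_lt (measure_mono hA_sub) measure_closedBall_lt_top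
  -- measurability
  have hFm : Measurable (fun z : (EuclideanSpace ℝ (Fin d)) × ℝ =>
      min (z.2 ^ (-(γ * δ)) * r ^ d * ‖z.1‖ ^ q) 1 * min (z.2 ^ (-(γ * δ)) * Rb) 1) := by
    apply Measurable.mul
    · exact (((measurable_snd.pow measurable_const).mul_const _).mul
        ((measurable_norm.comp measurable_fst).pow measurable_const)).min measurable_const
    · exact ((measurable_snd.pow measurable_const).mul_const _).min measurable_const
  have hGsm : StronglyMeasurable G := by
    rw [hG_def]
    exact hFm.stronglyMeasurable.integral_prod_right'
  have hFv_meas : ∀ x : EuclideanSpace ℝ (Fin d), Measurable (fun v : ℝ =>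
      min (v ^ (-(γ * δ)) * r ^ d * ‖x‖ ^ q) 1 * min (v ^ (-(γ * δ)) * Rb) 1) := by
    intro x
    exact hFm.comp measurable_prodMk_left
  -- pointwise bounds on the inner integrand
  have hF_nonneg : ∀ (x : EuclideanSpace ℝ (Fin d)) (v : ℝ), 0 < v →
      0 ≤ min (v ^ (-(γ * δ)) * r ^ d * ‖x‖ ^ q) 1 * min (v ^ (-(γ * δ)) * Rb) 1 := by
    intro x v hv
    have h1 : (0:ℝ) ≤ v ^ (-(γ * δ)) * r ^ d * ‖x‖ ^ q := by positivity
    have h2 : (0:ℝ) ≤ v ^ (-(γ * δ)) * Rb := by positivity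
    exact mul_nonneg (le_min h1 zero_le_one) (le_min h2 zero_le_one)
  have hF_le1 : ∀ (x : EuclideanSpace ℝ (Fin d)) (v : ℝ), 0 < v →
      min (v ^ (-(γ * δ)) * r ^ d * ‖x‖ ^ q) 1 * min (v ^ (-(γ * δ)) * Rb) 1 ≤ 1 := by
    intro x v hv
    have h2 : (0:ℝ) ≤ v ^ (-(γ * δ)) * Rb := by positivity
    exact mul_le_one₀ (min_le_right _ _) (le_min h2 zero_le_one) (min_le_right _ _)
  have hFint : ∀ x : EuclideanSpace ℝ (Fin d), IntegrableOn (fun v : ℝ =>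
      min (v ^ (-(γ * δ)) * r ^ d * ‖x‖ ^ q) 1 * min (v ^ (-(γ * δ)) * Rb) 1)
      (Ioc (0:ℝ) 1) := by
    intro x
    apply Integrable.mono' (integrableOn_const (C := (1:ℝ)) measure_Ioc_lt_top.ne)
      ((hFv_meas x).aestronglyMeasurable.restrict)
    filter_upwards [ae_restrict_mem measurableSet_Ioc] with v hv
    rw [Real.norm_eq_abs, abs_of_nonneg (hF_nonneg x v hv.1)]
    exact hF_le1 x v hv.1
  -- r^d * ‖x‖^q ≤ 1 on the annulus
  have hxq1 : ∀ x : EuclideanSpace ℝ (Fin d), 2 * r ≤ ‖x‖ → r ^ d * ‖x‖ ^ q ≤ 1 := by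
    intro x hx
    have h1 : ‖x‖ ^ q ≤ (2*r) ^ q := Real.rpow_le_rpow_of_nonpos h2r0 hx hq0
    have h2 : r ^ d * ‖x‖ ^ q ≤ r ^ d * (2*r) ^ q :=
      mul_le_mul_of_nonneg_left h1 (by positivity)
    refine le_trans h2 ?_
    have heq : r ^ d * (2*r) ^ q = 2 ^ q * r ^ ((d:ℝ) + q) := by
      rw [Real.mul_rpow (by norm_num) hr0.le, Real.rpow_add hr0, ← Real.rpow_natCast r d]
      ring
    rw [heq]
    have h3 : (2:ℝ) ^ q ≤ 1 := Real.rpow_le_one_of_one_le_of_nonpos one_le_two hq0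
    have h4 : r ^ ((d:ℝ) + q) ≤ 1 :=
      Real.rpow_le_one_of_one_le_of_nonpos (by linarith) hdq
    nlinarith [Real.rpow_nonneg (le_of_lt hr0) ((d:ℝ)+q),
      Real.rpow_nonneg (by norm_num : (0:ℝ) ≤ 2) q]
  -- inner lower bound
  have hInner_lb : ∀ x ∈ A, r ^ d * ‖x‖ ^ q * Rb ≤ G x := by
    intro x hx
    have hA1 : r ^ d * ‖x‖ ^ q ≤ 1 := hxq1 x hx.1
    have hA1' : 0 ≤ r ^ d * ‖x‖ ^ q := by positivity
    have hconst : r ^ d * ‖x‖ ^ q * Rb =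
        ∫ _ in Ioc (0:ℝ) 1, r ^ d * ‖x‖ ^ q * Rb := by
      rw [setIntegral_const, Real.volume_real_Ioc]
      simp
    rw [hG_def, hconst]
    apply setIntegral_mono_on (integrableOn_const measure_Ioc_lt_top.ne)
      (hFint x) measurableSet_Ioc
    intro v hv
    have h1v : 1 ≤ v ^ (-(γ * δ)) :=
      Real.one_le_rpow_of_pos_of_le_one_of_nonpos hv.1 hv.2 (neg_nonpos.mpr hγδ0)
    have hm1 : r ^ d * ‖x‖ ^ q ≤ min (v ^ (-(γ * δ)) * r ^ d * ‖x‖ ^ q) 1 := by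
      apply le_min _ hA1
      nlinarith
    have hm2 : Rb ≤ min (v ^ (-(γ * δ)) * Rb) 1 := by
      apply le_min _ hRb1
      nlinarith
    exact mul_le_mul hm1 hm2 hRb0.le (le_trans hA1' hm1)
  -- value of the v-integral of the majorant
  have hKv : ∫ v in Ioc (0:ℝ) 1, v ^ (-(2 * (γ * δ))) = (1 - 2 * (γ * δ))⁻¹ := by
    rw [← intervalIntegral.integral_of_le zero_le_one]
    rw [integral_rpow (Or.inl (by linarith))]
    rw [Real.one_rpow, Real.zero_rpow (by linarith : -(2*(γ*δ)) + 1 ≠ 0)]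
    rw [show -(2*(γ*δ)) + 1 = 1 - 2*(γ*δ) by ring]
    rw [sub_zero, one_div]
  -- inner upper bound
  have hInner_ub : ∀ x : EuclideanSpace ℝ (Fin d),
      G x ≤ (1 - 2*(γ*δ))⁻¹ * (r ^ d * ‖x‖ ^ q * Rb) := by
    intro x
    have hmaj : IntegrableOn (fun v : ℝ => v ^ (-(2*(γ*δ))) * (r ^ d * ‖x‖ ^ q * Rb))
        (Ioc (0:ℝ) 1) := by
      have h := intervalIntegral.intervalIntegrable_rpow'
        (a := 0) (b := 1) (r := -(2*(γ*δ))) (by linarith)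
      exact ((intervalIntegrable_iff_integrableOn_Ioc_of_le zero_le_one).mp h).mul_const _
    have hkey : G x ≤ ∫ v in Ioc (0:ℝ) 1, v ^ (-(2*(γ*δ))) * (r ^ d * ‖x‖ ^ q * Rb) := by
      rw [hG_def]
      apply setIntegral_mono_on (hFint x) hmaj measurableSet_Ioc
      intro v hv
      have hv0 : 0 < v := hv.1
      have ha : 0 ≤ v ^ (-(γ * δ)) * r ^ d * ‖x‖ ^ q := by positivity
      have hb : 0 ≤ v ^ (-(γ * δ)) * Rb := by positivity
      calc min (v ^ (-(γ * δ)) * r ^ d * ‖x‖ ^ q) 1 * min (v ^ (-(γ * δ)) * Rb) 1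
          ≤ (v ^ (-(γ * δ)) * r ^ d * ‖x‖ ^ q) * (v ^ (-(γ * δ)) * Rb) :=
            mul_le_mul (min_le_left _ _) (min_le_left _ _) (le_min hb zero_le_one) ha
        _ = v ^ (-(2*(γ*δ))) * (r ^ d * ‖x‖ ^ q * Rb) := by
            rw [show -(2*(γ*δ)) = -(γ*δ) + -(γ*δ) by ring, Real.rpow_add hv0]
            ring
    rw [integral_mul_const, hKv] at hkey
    exact hkey
  -- nonnegativity and boundedness of G
  have hG_nonneg : ∀ x, 0 ≤ G x := by
    intro x
    rw [hG_def]
    apply setIntegral_nonneg measurableSet_Ioc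
    intro v hv
    exact hF_nonneg x v hv.1
  have hG_le1 : ∀ x, G x ≤ 1 := by
    intro x
    have hmono : G x ≤ ∫ _ in Ioc (0:ℝ) 1, (1:ℝ) := by
      rw [hG_def]
      apply setIntegral_mono_on (hFint x) (integrableOn_const measure_Ioc_lt_top.ne)
        measurableSet_Ioc
      intro v hv
      exact hF_le1 x v hv.1
    rw [setIntegral_const, Real.volume_real_Ioc] at hmono
    simpa using hmono
  have hG_int : IntegrableOn G A := by
    apply Integrable.mono' (integrableOn_const (C := (1:ℝ)) hA_fin.ne)
      (hGsm.aestronglyMeasurable.restrict)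
    filter_upwards with x
    rw [Real.norm_eq_abs, abs_of_nonneg (hG_nonneg x)]
    exact hG_le1 x
  have hnq_int : IntegrableOn (fun x : EuclideanSpace ℝ (Fin d) => ‖x‖ ^ q) A := by
    apply Integrable.mono' (integrableOn_const (C := (1:ℝ)) hA_fin.ne)
      ((measurable_norm.pow measurable_const).aestronglyMeasurable.restrict)
    filter_upwards [ae_restrict_mem hA_meas] with x hx
    rw [Real.norm_eq_abs, abs_of_nonneg (Real.rpow_nonneg (norm_nonneg x) q)]
    exact Real.rpow_le_one_of_one_le_of_nonpos (by linarith [hx.1]) hq0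
  -- the radial integral
  have hrad := radial_eq d hd q (2*r) (R/2) h2r0
  rw [← hA_def, ← hcd_def, ← hp_def] at hrad
  -- 1-d integral bounds
  have hIcc_int : IntegrableOn (fun y : ℝ => y ^ p) (Icc (2*r) (R/2)) := by
    apply (integrableOn_Ioi_rpow_of_lt hp one_pos).mono_set
    intro y hy
    exact lt_of_lt_of_le (by linarith) hy.1
  have hJ_ub : ∫ y in Icc (2*r) (R/2), y ^ p ≤ (2*r) ^ (p+1) / (-(p+1)) := by
    rw [integral_Icc_eq_integral_Ioc]
    have h1 : ∫ y in Ioc (2*r) (R/2), y ^ p ≤ ∫ y in Ioi (2*r), y ^ p := by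
      apply setIntegral_mono_set (integrableOn_Ioi_rpow_of_lt hp h2r0)
      · filter_upwards [ae_restrict_mem measurableSet_Ioi] with y hy
        exact Real.rpow_nonneg (le_trans h2r0.le (le_of_lt hy)) p
      · exact HasSubset.Subset.eventuallyLE Ioc_subset_Ioi_self
    rw [integral_Ioi_rpow_of_lt hp h2r0] at h1
    rw [div_neg, ← neg_div]
    exact h1
  have hJ_lb : 2*r*(4*r) ^ p ≤ ∫ y in Icc (2*r) (R/2), y ^ p := by
    have hsub : Icc (2*r) (4*r) ⊆ Icc (2*r) (R/2) := Icc_subset_Icc_right (by linarith)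
    have h1 : ∫ y in Icc (2*r) (4*r), y ^ p ≤ ∫ y in Icc (2*r) (R/2), y ^ p := by
      apply setIntegral_mono_set hIcc_int
      · filter_upwards [ae_restrict_mem measurableSet_Icc] with y hy
        exact Real.rpow_nonneg (by linarith [hy.1]) p
      · exact HasSubset.Subset.eventuallyLE hsub
    refine le_trans ?_ h1
    have h2 : ∫ _ in Icc (2*r) (4*r), (4*r) ^ p ≤ ∫ y in Icc (2*r) (4*r), y ^ p := by
      apply setIntegral_mono_on (integrableOn_const measure_Icc_lt_top.ne)
        (hIcc_int.mono_set hsub) measurableSet_Icc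
      intro y hy
      exact Real.rpow_le_rpow_of_nonpos (by linarith [hy.1]) hy.2 (by linarith)
    rw [setIntegral_const, Real.volume_real_Icc_of_le (by linarith),
      smul_eq_mul] at h2
    calc 2*r*(4*r) ^ p = (4*r - 2*r) * (4*r) ^ p := by ring
      _ ≤ ∫ y in Icc (2*r) (4*r), y ^ p := h2
  -- outer bounds
  have main_lb : (r ^ d * Rb) * (cd * ∫ y in Icc (2*r) (R/2), y ^ p) ≤ ∫ x in A, G x := by
    rw [← hrad, ← integral_const_mul]
    apply setIntegral_mono_on (hnq_int.const_mul _) hG_int hA_meas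
    intro x hx
    calc (r:ℝ) ^ d * Rb * ‖x‖ ^ q = r ^ d * ‖x‖ ^ q * Rb := by ring
      _ ≤ G x := hInner_lb x hx
  have main_ub : ∫ x in A, G x ≤
      (1 - 2*(γ*δ))⁻¹ * (r ^ d * Rb) * (cd * ∫ y in Icc (2*r) (R/2), y ^ p) := by
    have h1 : ∫ x in A, G x ≤ ∫ x in A, (1 - 2*(γ*δ))⁻¹ * (r ^ d * Rb) * ‖x‖ ^ q := by
      apply setIntegral_mono_on hG_int (hnq_int.const_mul _) hA_meas
      intro x _
      calc G x ≤ (1 - 2*(γ*δ))⁻¹ * (r ^ d * ‖x‖ ^ q * Rb) := hInner_ub x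
        _ = (1 - 2*(γ*δ))⁻¹ * (r ^ d * Rb) * ‖x‖ ^ q := by ring
    rw [integral_const_mul, hrad] at h1
    exact h1
  -- exponent rearrangements
  have hr_split : r ^ ((d:ℝ)*(2-δ)) = r ^ (d:ℕ) * (r * r ^ p) := by
    have he : (d:ℝ)*(2-δ) = (d:ℝ) + (1 + p) := by rw [hp_def, hq_def]; ring
    rw [he, Real.rpow_add hr0, Real.rpow_add hr0, Real.rpow_one, Real.rpow_natCast]
  have hr_split2 : r ^ ((d:ℝ)*(2-δ)) = r ^ (d:ℕ) * r ^ (p+1) := by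
    have he : (d:ℝ)*(2-δ) = (d:ℝ) + (p+1) := by rw [hp_def, hq_def]; ring
    rw [he, Real.rpow_add hr0, Real.rpow_natCast]
  have heq_lb : c1 * (r ^ ((d:ℝ)*(2-δ)) * Rb) = (r ^ d * Rb) * (cd * (2*r*(4*r) ^ p)) := by
    rw [hr_split, hc1_def, show (4:ℝ)*r = 4*r by rfl,
      Real.mul_rpow (by norm_num : (0:ℝ) ≤ 4) hr0.le]
    ring
  have heq_ub : (1 - 2*(γ*δ))⁻¹ * (r ^ d * Rb) * (cd * ((2*r) ^ (p+1) / (-(p+1)))) =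
      C1 * (r ^ ((d:ℝ)*(2-δ)) * Rb) := by
    rw [hr_split2, hC1_def, Real.mul_rpow (by norm_num : (0:ℝ) ≤ 2) hr0.le]
    ring
  have hXpos : (0:ℝ) < r ^ ((d:ℝ)*(2-δ)) * Rb :=
    mul_pos (Real.rpow_pos_of_pos hr0 _) hRb0
  constructor
  · calc min c1 C1 * (r ^ ((d:ℝ)*(2-δ)) * Rb)
        ≤ c1 * (r ^ ((d:ℝ)*(2-δ)) * Rb) :=
          mul_le_mul_of_nonneg_right (min_le_left _ _) hXpos.le
      _ = (r ^ d * Rb) * (cd * (2*r*(4*r) ^ p)) := heq_lb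
      _ ≤ (r ^ d * Rb) * (cd * ∫ y in Icc (2*r) (R/2), y ^ p) := by
          apply mul_le_mul_of_nonneg_left _ (by positivity)
          exact mul_le_mul_of_nonneg_left hJ_lb hcd.le
      _ ≤ ∫ x in A, G x := main_lb
  · calc ∫ x in A, G x
        ≤ (1 - 2*(γ*δ))⁻¹ * (r ^ d * Rb) * (cd * ∫ y in Icc (2*r) (R/2), y ^ p) := main_ub
      _ ≤ (1 - 2*(γ*δ))⁻¹ * (r ^ d * Rb) * (cd * ((2*r) ^ (p+1) / (-(p+1)))) := by
          apply mul_le_mul_of_nonneg_left _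
            (mul_nonneg (inv_nonneg.mpr (by linarith)) (by positivity))
          exact mul_le_mul_of_nonneg_left hJ_ub hcd.le
      _ = C1 * (r ^ ((d:ℝ)*(2-δ)) * Rb) := heq_ub
      _ ≤ max c1 C1 * (r ^ ((d:ℝ)*(2-δ)) * Rb) :=
          mul_le_mul_of_nonneg_right (le_max_right _ _) hXpos.le
end

section
/- Let d ≥ 1 be an integer and let δ > 1. Then there exist R₀ ≥ 2 and constants 0 < c' ≤ C' < ∞ (depending only on d and δ) such that for every R ≥ R₀ one has c'·R^{d(1−δ)}·(log R)^2 ≤ ∫_0^1 min( u^{−1} R^{d(1−δ)} (1 + log₊(u R^{dδ})), 1 ) du ≤ C'·R^{d(1−δ)}·(log R)^2. -/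
/-!
Write `A = R^{-b}` with `b = d(δ-1)`, `C = R^{dδ}` and `L = log R`. Where the minimum is not
capped, the integrand is `A·(1 + log₊(uC))/u`, and on `u ≥ R^{-b/2}` the logarithmic factor is
of order `L` while the whole expression stays below `1`; integrating `1/u` over
`[R^{-b/2}, 1]` gives the other factor `(b/2)·L`. For the upper bound, the integrand is at most
`1` on `(0, A]` and at most `A(1 + log C)/u` on `(A, 1]`, which integrates to
`A(1 + dδL)·bL`.
-/

open MeasureTheory Real Set Filter

noncomputable def escapeIntegrand (A C u : ℝ) : ℝ :=
  min (u⁻¹ * A * (1 + max (Real.log (u * C)) 0)) 1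

theorem integrableOn_Ioc_inv {a : ℝ} (ha : 0 < a) (b : ℝ) :
    IntegrableOn (fun u : ℝ => u⁻¹) (Ioc a b) :=
  ((continuousOn_inv₀.mono fun _ hu => (ha.trans_le hu.1).ne').integrableOn_Icc).mono_set
    Ioc_subset_Icc_self

theorem integral_Ioc_inv {a b : ℝ} (ha : 0 < a) (hab : a ≤ b) :
    ∫ u in Ioc a b, u⁻¹ = Real.log b - Real.log a := by
  rw [← intervalIntegral.integral_of_le hab, integral_inv_of_pos ha (ha.trans_le hab),
    Real.log_div (ha.trans_le hab).ne' ha.ne']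

section escapeIntegrand

variable {A C : ℝ}

theorem escapeIntegrand_nonneg (hA : 0 ≤ A) {u : ℝ} (hu : 0 ≤ u) :
    0 ≤ escapeIntegrand A C u :=
  le_min (mul_nonneg (by positivity) (by linarith [le_max_right (Real.log (u * C)) 0])) zero_le_one

theorem escapeIntegrand_le_one (u : ℝ) : escapeIntegrand A C u ≤ 1 :=
  min_le_right _ _

theorem measurable_escapeIntegrand : Measurable (escapeIntegrand A C) := by
  unfold escapeIntegrand
  fun_prop

theorem integrableOn_escapeIntegrand (hA : 0 ≤ A) :
    IntegrableOn (escapeIntegrand A C) (Ioc 0 1) := by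
  refine Integrable.mono' (g := fun _ => 1) (integrableOn_const measure_Ioc_lt_top.ne)
    measurable_escapeIntegrand.aestronglyMeasurable ?_
  filter_upwards [ae_restrict_mem measurableSet_Ioc] with u hu
  rw [Real.norm_of_nonneg (escapeIntegrand_nonneg hA hu.1.le)]
  exact escapeIntegrand_le_one u

/-- On `(s, 1]` the integrand dominates `A K / u` as soon as `K ≤ log (s C)` and `A K ≤ s`. -/
theorem le_integral_escapeIntegrand (hA : 0 < A) (hC : 0 < C) {s K : ℝ} (hs : 0 < s)
    (hs1 : s ≤ 1) (hKC : K ≤ Real.log (s * C)) (hKA : A * K ≤ s) :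
    A * K * -Real.log s ≤ ∫ u in Ioc 0 1, escapeIntegrand A C u := by
  have hle : ∀ u ∈ Ioc s 1, A * K * u⁻¹ ≤ escapeIntegrand A C u := by
    rintro u ⟨hsu, -⟩
    have hu : 0 < u := hs.trans hsu
    refine le_min ?_ ?_
    · have hlog : K ≤ 1 + max (Real.log (u * C)) 0 := by
        have := Real.log_le_log (by positivity) (mul_le_mul_of_nonneg_right hsu.le hC.le)
        linarith [le_max_left (Real.log (u * C)) 0]
      calc A * K * u⁻¹ = u⁻¹ * A * K := by ring
        _ ≤ u⁻¹ * A * (1 + max (Real.log (u * C)) 0) := by gcongr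
    · calc A * K * u⁻¹ ≤ s * s⁻¹ := by gcongr
        _ = 1 := mul_inv_cancel₀ hs.ne'
  calc A * K * -Real.log s = ∫ u in Ioc s 1, A * K * u⁻¹ := by
        rw [integral_const_mul, integral_Ioc_inv hs hs1, Real.log_one, zero_sub]
    _ ≤ ∫ u in Ioc s 1, escapeIntegrand A C u :=
        setIntegral_mono_on ((integrableOn_Ioc_inv hs 1).const_mul _)
          ((integrableOn_escapeIntegrand hA.le).mono_set (Ioc_subset_Ioc hs.le le_rfl))
          measurableSet_Ioc hle
    _ ≤ ∫ u in Ioc 0 1, escapeIntegrand A C u :=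
        setIntegral_mono_set (integrableOn_escapeIntegrand hA.le)
          (ae_restrict_of_forall_mem measurableSet_Ioc fun _ hu =>
            escapeIntegrand_nonneg hA.le hu.1.le)
          (Ioc_subset_Ioc hs.le le_rfl).eventuallyLE

theorem integral_escapeIntegrand_le (hA : 0 < A) (hA1 : A ≤ 1) (hC : 1 ≤ C) :
    ∫ u in Ioc 0 1, escapeIntegrand A C u ≤ A + A * (1 + Real.log C) * -Real.log A := by
  have hint := integrableOn_escapeIntegrand (C := C) hA.le
  have hcap : ∫ u in Ioc 0 A, escapeIntegrand A C u ≤ A := by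
    calc ∫ u in Ioc 0 A, escapeIntegrand A C u ≤ ∫ _ in Ioc 0 A, (1 : ℝ) :=
          setIntegral_mono_on (hint.mono_set (Ioc_subset_Ioc le_rfl hA1))
            (integrableOn_const measure_Ioc_lt_top.ne) measurableSet_Ioc
            fun u _ => escapeIntegrand_le_one u
      _ = A := by simp [hA.le]
  have hle : ∀ u ∈ Ioc A 1, escapeIntegrand A C u ≤ A * (1 + Real.log C) * u⁻¹ := by
    rintro u ⟨hAu, hu1⟩
    have hu : 0 < u := hA.trans hAu
    have hlog : max (Real.log (u * C)) 0 ≤ Real.log C :=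
      max_le (Real.log_le_log (by positivity) (by nlinarith)) (Real.log_nonneg hC)
    calc escapeIntegrand A C u ≤ u⁻¹ * A * (1 + max (Real.log (u * C)) 0) := min_le_left _ _
      _ ≤ u⁻¹ * A * (1 + Real.log C) := by gcongr
      _ = A * (1 + Real.log C) * u⁻¹ := by ring
  have htail : ∫ u in Ioc A 1, escapeIntegrand A C u ≤ A * (1 + Real.log C) * -Real.log A := by
    calc ∫ u in Ioc A 1, escapeIntegrand A C u ≤ ∫ u in Ioc A 1, A * (1 + Real.log C) * u⁻¹ :=
          setIntegral_mono_on (hint.mono_set (Ioc_subset_Ioc hA.le le_rfl))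
            ((integrableOn_Ioc_inv hA 1).const_mul _) measurableSet_Ioc hle
      _ = A * (1 + Real.log C) * -Real.log A := by
          rw [integral_const_mul, integral_Ioc_inv hA hA1, Real.log_one, zero_sub]
  rw [← Ioc_union_Ioc_eq_Ioc hA.le hA1, setIntegral_union (Ioc_disjoint_Ioc_of_le le_rfl)
    measurableSet_Ioc (hint.mono_set (Ioc_subset_Ioc le_rfl hA1))
    (hint.mono_set (Ioc_subset_Ioc hA.le le_rfl))]
  exact add_le_add hcap htail

end escapeIntegrand

theorem eventually_le_integral_escapeIntegrand_rpow {b c : ℝ} (hb : 0 < b) (hbc : b / 2 ≤ c) :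
    ∀ᶠ R in atTop, (c - b / 2) * (b / 2) * (R ^ (-b) * Real.log R ^ 2) ≤
      ∫ u in Ioc 0 1, escapeIntegrand (R ^ (-b)) (R ^ c) u := by
  have hlog := ((isLittleO_log_rpow_atTop (half_pos hb)).const_mul_left (c - b / 2)).eventuallyLE
  filter_upwards [hlog, eventually_ge_atTop 1] with R hKR hR
  have hR0 : 0 < R := one_pos.trans_le hR
  set K := (c - b / 2) * Real.log R with hKdef
  have hK : 0 ≤ K := mul_nonneg (by linarith) (Real.log_nonneg hR)
  rw [Real.norm_of_nonneg hK, Real.norm_of_nonneg (by positivity)] at hKR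
  -- With `s = R^{-b/2}` and `A = s²`, the condition `A K ≤ s` becomes `K ≤ R^{b/2}`.
  have hAs : R ^ (-b) = R ^ (-(b / 2)) * R ^ (-(b / 2)) := by
    rw [← Real.rpow_add hR0]; ring_nf
  have hsK : R ^ (-(b / 2)) * K ≤ 1 := by
    rw [Real.rpow_neg hR0.le]
    exact inv_mul_le_one_of_le₀ hKR (by positivity)
  have key := le_integral_escapeIntegrand (C := R ^ c) (s := R ^ (-(b / 2))) (K := K)
    (Real.rpow_pos_of_pos hR0 _) (Real.rpow_pos_of_pos hR0 _) (Real.rpow_pos_of_pos hR0 _)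
    (Real.rpow_le_one_of_one_le_of_nonpos hR (by linarith))
    (le_of_eq (by rw [← Real.rpow_add hR0, Real.log_rpow hR0, hKdef]; ring))
    (by rw [hAs, mul_assoc]; exact mul_le_of_le_one_right (by positivity) hsK)
  rw [Real.log_rpow hR0] at key
  convert key using 1
  ring

theorem eventually_integral_escapeIntegrand_rpow_le {b c : ℝ} (hb : 0 ≤ b) (hc : 0 ≤ c) :
    ∀ᶠ R in atTop, ∫ u in Ioc 0 1, escapeIntegrand (R ^ (-b)) (R ^ c) u ≤
      (1 + (1 + c) * b) * (R ^ (-b) * Real.log R ^ 2) := by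
  filter_upwards [eventually_ge_atTop (exp 1)] with R hR
  have hR0 : 0 < R := (exp_pos 1).trans_le hR
  have hL : 1 ≤ Real.log R := by rwa [Real.le_log_iff_exp_le hR0]
  have hR1 : 1 ≤ R := by linarith [add_one_le_exp 1]
  have hA : 0 < R ^ (-b) := Real.rpow_pos_of_pos hR0 _
  have bound := integral_escapeIntegrand_le hA
    (Real.rpow_le_one_of_one_le_of_nonpos hR1 (by linarith)) (Real.one_le_rpow hR1 hc)
  rw [Real.log_rpow hR0, Real.log_rpow hR0] at bound
  refine bound.trans ?_
  have hbL : 0 ≤ b * Real.log R := by positivity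
  nlinarith [mul_le_mul_of_nonneg_left hL (mul_nonneg hA.le hbL),
    mul_le_mul_of_nonneg_left hL hA.le]

/-- Integrated one-edge escape probability in the boundary regime `γδ = 1`:
`∫_0^1 min(u⁻¹ R^{d(1-δ)}(1 + log₊(u R^{dδ})), 1) du ≍ R^{d(1-δ)} (log R)²`
for all sufficiently large `R`. -/
theorem stmt_19 (d : ℕ) (hd : 1 ≤ d) (δ : ℝ) (hδ : 1 < δ) :
    ∃ R₀ : ℝ, 2 ≤ R₀ ∧ ∃ c' C' : ℝ, 0 < c' ∧ c' ≤ C' ∧ ∀ R : ℝ, R₀ ≤ R →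
      c' * (R ^ ((d : ℝ) * (1 - δ)) * Real.log R ^ 2) ≤
          (∫ u in Ioc (0 : ℝ) 1,
              min (u⁻¹ * R ^ ((d : ℝ) * (1 - δ)) *
                (1 + max (Real.log (u * R ^ ((d : ℝ) * δ))) 0)) 1) ∧
      (∫ u in Ioc (0 : ℝ) 1,
              min (u⁻¹ * R ^ ((d : ℝ) * (1 - δ)) *
                (1 + max (Real.log (u * R ^ ((d : ℝ) * δ))) 0)) 1) ≤
          C' * (R ^ ((d : ℝ) * (1 - δ)) * Real.log R ^ 2) := by
  have hd' : (1 : ℝ) ≤ d := by exact_mod_cast hd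
  have hb : 0 < (d : ℝ) * (δ - 1) := by nlinarith
  have hexp : (d : ℝ) * (1 - δ) = -((d : ℝ) * (δ - 1)) := by ring
  obtain ⟨R₁, hR₁⟩ := eventually_atTop.mp
    ((eventually_le_integral_escapeIntegrand_rpow hb (c := d * δ) (by nlinarith)).and
      (eventually_integral_escapeIntegrand_rpow_le hb.le (c := d * δ) (by positivity)))
  refine ⟨max R₁ 2, le_max_right _ _, (d * δ - d * (δ - 1) / 2) * (d * (δ - 1) / 2),
    1 + (1 + d * δ) * (d * (δ - 1)), by nlinarith, by nlinarith, fun R hR => ?_⟩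
  rw [hexp]
  exact hR₁ R (le_of_max_le_left hR)
end
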